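/- arXiv:1709.01569 — 5 statements merged into one kernel-verified Lean document; each statement's English description precedes it below -/
import Mathlib

section
/- If a region P ⊆ ℝ² is both x-convex and y-convex (orthoconvex), and there exist a horizontal segment δ₁ ⊆ P joining a point with minimal x-coordinate of P to a point with maximal x-coordinate of P, and a vertical segment δ₂ ⊆ P joining a point with minimal y-coordinate of P to a point with maximal y-coordinate of P, then δ₁ and δ₂ intersect in a point M, and every point of P is r-visible from M; hence P is r-star. -/
/-!
Put `M = (x₂, y₁)`. Every point of `P` has its coordinates in `[xlo, xhi] × [ylo, yhi]`, so `M`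
lies on both segments. For `p ∈ P`, the point `(x₂, p.2)` is on `δ₂`, so x-convexity puts the
side of `spanRect M p` through `p` into `P`; the opposite side lies on `δ₁`. Every vertical
chord of the rectangle joins these two sides, so y-convexity puts it into `P`.
-/

/-- The axis-aligned rectangle spanned by two points of the plane. -/
def spanRect (p q : ℝ × ℝ) : Set (ℝ × ℝ) :=
  Set.Icc (min p.1 q.1) (max p.1 q.1) ×ˢ Set.Icc (min p.2 q.2) (max p.2 q.2)

open Set

section Slices

variable {α β : Type*} [TopologicalSpace α] [TopologicalSpace β] {P : Set (α × β)}

lemma uIcc_prod_singleton_subset_of_isPreconnected [LinearOrder α] [OrderClosedTopology α]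
    {c : β} (hP : IsPreconnected {p : α × β | p ∈ P ∧ p.2 = c}) {u v : α}
    (hu : (u, c) ∈ P) (hv : (v, c) ∈ P) : uIcc u v ×ˢ {c} ⊆ P := by
  have hslice : (Prod.fst '' {p : α × β | p ∈ P ∧ p.2 = c}).OrdConnected :=
    (hP.image _ continuous_fst.continuousOn).ordConnected
  rintro ⟨a, b⟩ ⟨ha, rfl : b = c⟩
  obtain ⟨q, ⟨hqP, hq2⟩, hq1⟩ :=
    hslice.uIcc_subset ⟨_, ⟨hu, rfl⟩, rfl⟩ ⟨_, ⟨hv, rfl⟩, rfl⟩ ha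
  rwa [← Prod.ext hq1 hq2]

lemma singleton_prod_uIcc_subset_of_isPreconnected [LinearOrder β] [OrderClosedTopology β]
    {c : α} (hP : IsPreconnected {p : α × β | p ∈ P ∧ p.1 = c}) {u v : β}
    (hu : (c, u) ∈ P) (hv : (c, v) ∈ P) : {c} ×ˢ uIcc u v ⊆ P := by
  have hslice : (Prod.snd '' {p : α × β | p ∈ P ∧ p.1 = c}).OrdConnected :=
    (hP.image _ continuous_snd.continuousOn).ordConnected
  rintro ⟨a, b⟩ ⟨rfl : a = c, hb⟩
  obtain ⟨q, ⟨hqP, hq1⟩, hq2⟩ :=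
    hslice.uIcc_subset ⟨_, ⟨hu, rfl⟩, rfl⟩ ⟨_, ⟨hv, rfl⟩, rfl⟩ hb
  rwa [← Prod.ext hq1 hq2]

end Slices

lemma spanRect_subset_of_orthoconvex {P : Set (ℝ × ℝ)}
    (hxconv : ∀ y : ℝ, IsPreconnected {p : ℝ × ℝ | p ∈ P ∧ p.2 = y})
    (hyconv : ∀ x : ℝ, IsPreconnected {p : ℝ × ℝ | p ∈ P ∧ p.1 = x})
    {M p : ℝ × ℝ} (hp : p ∈ P) (hcorner : (M.1, p.2) ∈ P)
    (hside : uIcc M.1 p.1 ×ˢ {M.2} ⊆ P) : spanRect M p ⊆ P := by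
  rintro ⟨a, b⟩ ⟨ha, hb⟩
  have hfar : (a, p.2) ∈ P :=
    uIcc_prod_singleton_subset_of_isPreconnected (hxconv p.2) hcorner hp ⟨ha, rfl⟩
  have hnear : (a, M.2) ∈ P := hside ⟨ha, rfl⟩
  exact singleton_prod_uIcc_subset_of_isPreconnected (hyconv a) hnear hfar ⟨rfl, hb⟩

theorem orthoconvex_with_spanning_segments_is_rStar_general (P : Set (ℝ × ℝ))
    (hxconv : ∀ y : ℝ, IsPreconnected {p : ℝ × ℝ | p ∈ P ∧ p.2 = y})
    (hyconv : ∀ x : ℝ, IsPreconnected {p : ℝ × ℝ | p ∈ P ∧ p.1 = x})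
    (xlo xhi ylo yhi y₁ x₂ : ℝ)
    (hxlo : IsLeast (Prod.fst '' P) xlo) (hxhi : IsGreatest (Prod.fst '' P) xhi)
    (hylo : IsLeast (Prod.snd '' P) ylo) (hyhi : IsGreatest (Prod.snd '' P) yhi)
    (hδ₁ : Set.Icc xlo xhi ×ˢ ({y₁} : Set ℝ) ⊆ P)
    (hδ₂ : ({x₂} : Set ℝ) ×ˢ Set.Icc ylo yhi ⊆ P) :
    (x₂, y₁) ∈ (Set.Icc xlo xhi ×ˢ ({y₁} : Set ℝ)) ∩ (({x₂} : Set ℝ) ×ˢ Set.Icc ylo yhi) ∧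
    ∀ p ∈ P, spanRect (x₂, y₁) p ⊆ P := by
  have fst_mem : ∀ p ∈ P, p.1 ∈ Icc xlo xhi := fun p hp =>
    ⟨hxlo.2 (mem_image_of_mem _ hp), hxhi.2 (mem_image_of_mem _ hp)⟩
  have snd_mem : ∀ p ∈ P, p.2 ∈ Icc ylo yhi := fun p hp =>
    ⟨hylo.2 (mem_image_of_mem _ hp), hyhi.2 (mem_image_of_mem _ hp)⟩
  have hylo_mem : ylo ∈ Icc ylo yhi := by
    obtain ⟨p, hp, rfl⟩ := hylo.1
    exact snd_mem p hp
  have hx₂ : x₂ ∈ Icc xlo xhi :=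
    fst_mem _ (hδ₂ (mk_mem_prod (mem_singleton x₂) hylo_mem))
  have hy₁ : y₁ ∈ Icc ylo yhi :=
    snd_mem _ (hδ₁ (mk_mem_prod (left_mem_Icc.2 (hx₂.1.trans hx₂.2)) (mem_singleton y₁)))
  refine ⟨⟨⟨hx₂, rfl⟩, ⟨rfl, hy₁⟩⟩, fun p hp => ?_⟩
  exact spanRect_subset_of_orthoconvex hxconv hyconv hp (hδ₂ ⟨rfl, snd_mem p hp⟩)
    ((prod_mono (uIcc_subset_Icc hx₂ (fst_mem p hp)) subset_rfl).trans hδ₁)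

/-- If an orthoconvex compact region `P` contains a horizontal segment `δ₁`
joining a leftmost point to a rightmost point of `P`, and a vertical segment `δ₂` joining
a lowest point to a highest point of `P`, then `δ₁` and `δ₂` intersect in a point
`M = (x₂, y₁)` and every point of `P` is r-visible from `M`; hence `P` is r-star. -/
theorem orthoconvex_with_spanning_segments_is_rStar (P : Set (ℝ × ℝ))
    (hP : IsCompact P) (hne : P.Nonempty)
    (hxconv : ∀ y : ℝ, IsPreconnected {p : ℝ × ℝ | p ∈ P ∧ p.2 = y})
    (hyconv : ∀ x : ℝ, IsPreconnected {p : ℝ × ℝ | p ∈ P ∧ p.1 = x})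
    (xlo xhi ylo yhi y₁ x₂ : ℝ)
    (hxlo : IsLeast (Prod.fst '' P) xlo) (hxhi : IsGreatest (Prod.fst '' P) xhi)
    (hylo : IsLeast (Prod.snd '' P) ylo) (hyhi : IsGreatest (Prod.snd '' P) yhi)
    (hδ₁ : Set.Icc xlo xhi ×ˢ ({y₁} : Set ℝ) ⊆ P)
    (hδ₂ : ({x₂} : Set ℝ) ×ˢ Set.Icc ylo yhi ⊆ P) :
    (x₂, y₁) ∈ (Set.Icc xlo xhi ×ˢ ({y₁} : Set ℝ)) ∩ (({x₂} : Set ℝ) ×ˢ Set.Icc ylo yhi) ∧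
    ∀ p ∈ P, spanRect (x₂, y₁) p ⊆ P :=
  orthoconvex_with_spanning_segments_is_rStar_general P hxconv hyconv xlo xhi ylo yhi y₁ x₂ hxlo
    hxhi hylo hyhi hδ₁ hδ₂
end

section
/- Let P be a simple orthogonal polygon (as a compact region) and let t be a horizontal tooth edge of P on the lower boundary, i.e., t = [c,d] × {h} ⊆ ∂P with P locally above t and both endpoints of t convex vertices (so the vertical edges adjacent to t go upward and P ∩ (ℝ × {h'}) for h' slightly below h near t is empty, and points of P adjacent to t on the left and right of [c,d] at height h do not exist). Then any point g ∈ P that r-sees some point of t satisfies c ≤ g₁ ≤ d, where g₁ is the x-coordinate of g; i.e., g lies in the vertical strip [c,d] × ℝ. -/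
theorem mk_mem_spanRect_of_mem_uIcc {p q : ℝ × ℝ} {x : ℝ} (hx : x ∈ Set.uIcc p.1 q.1) :
    (x, q.2) ∈ spanRect p q :=
  ⟨hx, min_le_right _ _, le_max_right _ _⟩

theorem Ico_inter_Icc_nonempty {α : Type*} [LinearOrder α] {l c a b : α}
    (hl : l < c) (ha : a < c) (hb : c ≤ b) : (Set.Ico l c ∩ Set.Icc a b).Nonempty :=
  ⟨max a l, ⟨le_max_right _ _, max_lt ha hl⟩, le_max_left _ _, (max_lt ha hl).le.trans hb⟩

theorem Ioc_inter_Icc_nonempty {α : Type*} [LinearOrder α] {d u a b : α}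
    (hu : d < u) (hb : d < b) (ha : a ≤ d) : (Set.Ioc d u ∩ Set.Icc a b).Nonempty :=
  ⟨min b u, ⟨lt_min hb hu, min_le_right _ _⟩, ha.trans (lt_min hb hu).le, min_le_left _ _⟩

theorem guard_seeing_tooth_lies_in_shadow_strip_general (P : Set (ℝ × ℝ))
    (c d h : ℝ)
    (ε : ℝ) (hε : 0 < ε)
    (hside : ∀ x ∈ Set.Ico (c - ε) c ∪ Set.Ioc d (d + ε), (x, h) ∉ P)
    (g : ℝ × ℝ)
    (hsee : ∃ q ∈ Set.Icc c d ×ˢ ({h} : Set ℝ), spanRect g q ⊆ P) :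
    c ≤ g.1 ∧ g.1 ≤ d := by
  obtain ⟨q, ⟨hqx, rfl : q.2 = h⟩, hrect⟩ := hsee
  have hseg : ∀ x ∈ Set.uIcc g.1 q.1, (x, q.2) ∈ P :=
    fun x hx => hrect (mk_mem_spanRect_of_mem_uIcc hx)
  constructor
  · by_contra! hgc
    obtain ⟨x, hx, hxg⟩ := Ico_inter_Icc_nonempty (sub_lt_self c hε) hgc hqx.1
    exact hside x (Or.inl hx) (hseg x (Set.Icc_subset_uIcc hxg))
  · by_contra! hgd
    obtain ⟨x, hx, hxg⟩ := Ioc_inter_Icc_nonempty (lt_add_of_pos_right d hε) hgd hqx.2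
    exact hside x (Or.inr hx) (hseg x (Set.Icc_subset_uIcc' hxg))

/-- If `t = [c,d] × {h}` is a lower tooth edge of a compact region `P`
(`P` locally above `t`, no points of `P` at height `h` just left of `c` or just right
of `d`), then any point `g ∈ P` that r-sees some point of `t` lies in the vertical
strip `[c,d] × ℝ`. -/
theorem guard_seeing_tooth_lies_in_shadow_strip (P : Set (ℝ × ℝ)) (hP : IsCompact P)
    (c d h : ℝ) (hcd : c ≤ d)
    (ht : Set.Icc c d ×ˢ ({h} : Set ℝ) ⊆ P)
    (ε : ℝ) (hε : 0 < ε)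
    (hside : ∀ x ∈ Set.Ico (c - ε) c ∪ Set.Ioc d (d + ε), (x, h) ∉ P)
    (hbelow : ∀ x ∈ Set.Icc c d, ∀ y ∈ Set.Ico (h - ε) h, (x, y) ∉ P)
    (g : ℝ × ℝ) (hg : g ∈ P)
    (hsee : ∃ q ∈ Set.Icc c d ×ˢ ({h} : Set ℝ), spanRect g q ⊆ P) :
    c ≤ g.1 ∧ g.1 ≤ d :=
  guard_seeing_tooth_lies_in_shadow_strip_general P c d h ε hε hside g hsee
end

section
/- For a family of closed intervals on ℝ in which every point of ℝ lies in at most two intervals (no three intervals share a common point), the minimum number of points needed to pierce all intervals is at least ⌈k/2⌉ where k is the number of intervals, and equals k − M where M is the maximum size of a matching in the intersection graph of the intervals. -/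
/-!
Send each interval to a point of a piercing set `S` lying in it. As no point lies in three
intervals, the pairs of intervals sent to the same point form a matching, and the intervals
that are not the larger member of such a pair are sent injectively into `S`; so
`k ≤ |S| + M`, and `k ≤ 2 |S|` because every fibre has at most two elements. Conversely, a
maximum matching admits a choice of one point per interval that agrees on matched pairs;
its image is a piercing set with at most `k - M` points.
-/

/-- A matching in the intersection graph of the intervals `[l j, r j]`: a finite set of
ordered pairs `(e.1, e.2)` with `e.1 < e.2`, each pair intersecting, and no two pairs
sharing an endpoint. -/
def IsIntervalMatching (k : ℕ) (l r : Fin k → ℝ) (E : Finset (Fin k × Fin k)) : Prop :=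
  (∀ e ∈ E, e.1 < e.2 ∧ (Set.Icc (l e.1) (r e.1) ∩ Set.Icc (l e.2) (r e.2)).Nonempty) ∧
  (∀ e ∈ E, ∀ e' ∈ E, e ≠ e' →
    e.1 ≠ e'.1 ∧ e.1 ≠ e'.2 ∧ e.2 ≠ e'.1 ∧ e.2 ≠ e'.2)

open Finset

section Pairs

variable {α β : Type*}

def PairsVertexDisjoint (E : Finset (α × α)) : Prop :=
  ∀ e ∈ E, ∀ e' ∈ E, e ≠ e' → e.1 ≠ e'.1 ∧ e.1 ≠ e'.2 ∧ e.2 ≠ e'.1 ∧ e.2 ≠ e'.2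

theorem PairsVertexDisjoint.eq_of_mem {E : Finset (α × α)} (hE : PairsVertexDisjoint E)
    {e e' : α × α} (he : e ∈ E) (he' : e' ∈ E) {j : α} (hj : j = e.1 ∨ j = e.2)
    (hj' : j = e'.1 ∨ j = e'.2) : e = e' := by
  by_contra hne
  have := hE e he e' he' hne
  rcases hj with rfl | rfl <;> rcases hj' with h | h <;> simp_all

theorem PairsVertexDisjoint.exists_mem_and_eq_on_pairs {E : Finset (α × α)}
    (hE : PairsVertexDisjoint E) {A : α → Set β} (hA : ∀ j, (A j).Nonempty)
    (hEA : ∀ e ∈ E, (A e.1 ∩ A e.2).Nonempty) :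
    ∃ g : α → β, (∀ j, g j ∈ A j) ∧ ∀ e ∈ E, g e.1 = g e.2 := by
  classical
  choose a ha using hA
  let q (e : α × α) := if h : (A e.1 ∩ A e.2).Nonempty then h.some else a e.1
  have hq : ∀ e ∈ E, q e ∈ A e.1 ∩ A e.2 := fun e he => by
    simpa only [q, dif_pos (hEA e he)] using (hEA e he).some_mem
  let g j := if h : ∃ e ∈ E, j = e.1 ∨ j = e.2 then q h.choose else a j
  have hg : ∀ e ∈ E, ∀ j, (j = e.1 ∨ j = e.2) → g j = q e := by
    intro e he j hj
    have h : ∃ e ∈ E, j = e.1 ∨ j = e.2 := ⟨e, he, hj⟩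
    simp only [g, dif_pos h]
    rw [hE.eq_of_mem h.choose_spec.1 he h.choose_spec.2 hj]
  refine ⟨g, fun j => ?_, fun e he => (hg e he _ (.inl rfl)).trans (hg e he _ (.inr rfl)).symm⟩
  by_cases h : ∃ e ∈ E, j = e.1 ∨ j = e.2
  · obtain ⟨e, he, hj⟩ := h
    rw [hg e he j hj]
    rcases hj with rfl | rfl
    exacts [(hq e he).1, (hq e he).2]
  · simp only [g, dif_neg h, ha]

variable [Fintype α] [DecidableEq α] [DecidableEq β]

theorem PairsVertexDisjoint.card_image_add_card_le {E : Finset (α × α)}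
    (hE : PairsVertexDisjoint E) (hne : ∀ e ∈ E, e.1 ≠ e.2) {g : α → β}
    (hg : ∀ e ∈ E, g e.1 = g e.2) : (univ.image g).card + E.card ≤ Fintype.card α := by
  set T := E.image Prod.snd
  have hT : T.card = E.card :=
    card_image_of_injOn fun e he e' he' h => hE.eq_of_mem he he' (.inr rfl) (.inr h)
  have himage : univ.image g ⊆ (univ \ T).image g := by
    intro x hx
    obtain ⟨j, -, rfl⟩ := mem_image.mp hx
    by_cases hj : j ∈ T
    · obtain ⟨e, he, rfl⟩ := mem_image.mp hj
      refine mem_image.mpr ⟨e.1, mem_sdiff.mpr ⟨mem_univ _, fun h1 => ?_⟩, hg e he⟩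
      obtain ⟨e', he', h⟩ := mem_image.mp h1
      obtain rfl := hE.eq_of_mem he he' (.inl rfl) (.inr h.symm)
      exact hne e he h.symm
    · exact mem_image_of_mem g (mem_sdiff.mpr ⟨mem_univ _, hj⟩)
  have hsplit := card_sdiff_add_card_eq_card (subset_univ T)
  have hle := (card_le_card himage).trans card_image_le
  rw [card_univ] at hsplit
  omega

end Pairs

section Collisions

variable {α β : Type*} [LinearOrder α] [Fintype α] [DecidableEq β]

def collisionPairs (f : α → β) : Finset (α × α) :=
  {e | e.1 < e.2 ∧ f e.1 = f e.2}

theorem mem_collisionPairs {f : α → β} {e : α × α} :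
    e ∈ collisionPairs f ↔ e.1 < e.2 ∧ f e.1 = f e.2 := by
  simp [collisionPairs]

theorem card_le_card_image_add_card_collisionPairs (f : α → β) :
    Fintype.card α ≤ (univ.image f).card + (collisionPairs f).card := by
  set T := (collisionPairs f).image Prod.snd
  have hinj : Set.InjOn f ↑(univ \ T) := by
    intro a ha b hb hab
    by_contra hne
    simp only [coe_sdiff, coe_univ, Set.mem_sdiff, Set.mem_univ, true_and, mem_coe] at ha hb
    rcases lt_or_gt_of_ne hne with h | h
    · exact hb (mem_image.mpr ⟨(a, b), mem_collisionPairs.mpr ⟨h, hab⟩, rfl⟩)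
    · exact ha (mem_image.mpr ⟨(b, a), mem_collisionPairs.mpr ⟨h, hab.symm⟩, rfl⟩)
  have hle := card_le_card_of_injOn f
    (fun j _ => mem_coe.mpr (mem_image_of_mem f (mem_univ j))) hinj
  have hsplit := card_sdiff_add_card_eq_card (subset_univ T)
  have hT : T.card ≤ (collisionPairs f).card := card_image_le
  rw [card_univ] at hsplit
  omega

theorem collisionPairs_eq_of_apply_eq {f : α → β}
    (hf : ∀ b, (univ.filter (f · = b)).card ≤ 2)
    {e e' : α × α} (he : e ∈ collisionPairs f) (he' : e' ∈ collisionPairs f)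
    (h : f e.1 = f e'.1) : e = e' := by
  rw [mem_collisionPairs] at he he'
  have hsub : {e.1, e.2} ⊆ univ.filter (f · = f e.1) := by
    simp [insert_subset_iff, he.2]
  have hfib := eq_of_subset_of_card_le hsub ((hf _).trans (card_pair he.1.ne).ge)
  have h1 : e'.1 ∈ ({e.1, e.2} : Finset α) := by simp [hfib, h]
  have h2 : e'.2 ∈ ({e.1, e.2} : Finset α) := by simp [hfib, h, ← he'.2]
  simp only [mem_insert, mem_singleton] at h1 h2
  ext <;> rcases h1 with h1 | h1 <;> rcases h2 with h2 | h2 <;> simp_all [lt_asymm]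

theorem collisionPairs_vertexDisjoint {f : α → β}
    (hf : ∀ b, (univ.filter (f · = b)).card ≤ 2) :
    PairsVertexDisjoint (collisionPairs f) := by
  intro e he e' he' hne
  have key := fun h => hne (collisionPairs_eq_of_apply_eq hf he he' h)
  have h := (mem_collisionPairs.mp he).2
  have h' := (mem_collisionPairs.mp he').2
  refine ⟨?_, ?_, ?_, ?_⟩ <;> intro hv <;> apply key
  all_goals simp [hv, h, h']

end Collisions

section Intervals

variable {k : ℕ} {l r : Fin k → ℝ}

theorem card_filter_eq_le_two
    (hno3 : ∀ x : ℝ, {j : Fin k | x ∈ Set.Icc (l j) (r j)}.ncard ≤ 2)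
    {f : Fin k → ℝ} (hf : ∀ j, f j ∈ Set.Icc (l j) (r j)) (x : ℝ) :
    (univ.filter (f · = x)).card ≤ 2 := by
  rw [← Set.ncard_coe_finset]
  refine (Set.ncard_le_ncard ?_ (Set.toFinite _)).trans (hno3 x)
  intro j hj
  rw [coe_filter] at hj
  exact hj.2 ▸ hf j

theorem isIntervalMatching_collisionPairs
    (hno3 : ∀ x : ℝ, {j : Fin k | x ∈ Set.Icc (l j) (r j)}.ncard ≤ 2)
    {f : Fin k → ℝ} (hf : ∀ j, f j ∈ Set.Icc (l j) (r j)) :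
    IsIntervalMatching k l r (collisionPairs f) := by
  refine ⟨fun e he => ?_, collisionPairs_vertexDisjoint (card_filter_eq_le_two hno3 hf)⟩
  obtain ⟨hlt, heq⟩ := mem_collisionPairs.mp he
  exact ⟨hlt, f e.1, hf e.1, heq ▸ hf e.2⟩

theorem le_card_of_pierces {M : ℕ}
    (hno3 : ∀ x : ℝ, {j : Fin k | x ∈ Set.Icc (l j) (r j)}.ncard ≤ 2)
    (hM : M ∈ upperBounds {m | ∃ E : Finset (Fin k × Fin k),
        IsIntervalMatching k l r E ∧ E.card = m})
    (S : Finset ℝ) (hS : ∀ j, ∃ s ∈ S, s ∈ Set.Icc (l j) (r j)) :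
    (k + 1) / 2 ≤ S.card ∧ k - M ≤ S.card := by
  choose f hfS hf using hS
  have himage : (univ.image f).card ≤ S.card :=
    card_le_card (image_subset_iff.mpr fun j _ => hfS j)
  have hdouble : k ≤ 2 * (univ.image f).card := by
    simpa using card_le_mul_card_image univ 2 fun x _ => card_filter_eq_le_two hno3 hf x
  have hcollide : k ≤ (univ.image f).card + (collisionPairs f).card := by
    simpa using card_le_card_image_add_card_collisionPairs f
  have hmatch : (collisionPairs f).card ≤ M :=
    hM ⟨_, isIntervalMatching_collisionPairs hno3 hf, rfl⟩
  omega

end Intervals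

/-- For a family of `k` closed intervals in which no point lies in three
intervals, every piercing set has size at least `⌈k/2⌉` and at least `k − M`, and some
piercing set has size exactly `k − M`, where `M` is the maximum matching size of the
intersection graph. -/
theorem piercing_number_eq_k_sub_matching (k M : ℕ) (l r : Fin k → ℝ)
    (hlr : ∀ j, l j ≤ r j)
    (hno3 : ∀ x : ℝ, {j : Fin k | x ∈ Set.Icc (l j) (r j)}.ncard ≤ 2)
    (hM : IsGreatest {m | ∃ E : Finset (Fin k × Fin k),
        IsIntervalMatching k l r E ∧ E.card = m} M) :
    (∀ S : Finset ℝ, (∀ j, ∃ s ∈ S, s ∈ Set.Icc (l j) (r j)) →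
        (k + 1) / 2 ≤ S.card ∧ k - M ≤ S.card) ∧
    ∃ S : Finset ℝ, (∀ j, ∃ s ∈ S, s ∈ Set.Icc (l j) (r j)) ∧ S.card = k - M := by
  have lower := le_card_of_pierces hno3 hM.2
  refine ⟨lower, ?_⟩
  obtain ⟨⟨E, ⟨hEint, hEdisj⟩, rfl⟩, -⟩ := hM
  obtain ⟨g, hg, hgE⟩ := PairsVertexDisjoint.exists_mem_and_eq_on_pairs hEdisj
    (fun j => Set.nonempty_Icc.mpr (hlr j)) fun e he => (hEint e he).2
  have hpierce : ∀ j, ∃ s ∈ univ.image g, s ∈ Set.Icc (l j) (r j) :=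
    fun j => ⟨g j, mem_image_of_mem g (mem_univ j), hg j⟩
  have hupper := PairsVertexDisjoint.card_image_add_card_le hEdisj
    (fun e he => (hEint e he).1.ne) hgE
  have hlower := (lower _ hpierce).2
  rw [Fintype.card_fin] at hupper
  exact ⟨_, hpierce, by omega⟩
end

section
/- Let P be a compact region and t = [c,d] × {h} a lower tooth edge of P (P locally above t, endpoints convex). If g = (g₁, g₂) ∈ P with g₁ ∉ [c,d] and g r-sees the nearer endpoint of t, then the horizontal segment from (g₁, h) to that endpoint is contained in P, contradicting that t is a maximal horizontal edge of ∂P; hence no point outside the vertical strip [c,d] × ℝ can r-see all of t. -/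
theorem exists_mem_Ico_sub_inter_uIcc {a c ε : ℝ} (hε : 0 < ε) (hac : a < c) :
    ∃ x ∈ Set.Ico (c - ε) c, x ∈ Set.uIcc a c := by
  refine ⟨max a (c - ε / 2), ⟨?_, max_lt hac (by linarith)⟩, ?_⟩
  · exact (by linarith : c - ε ≤ c - ε / 2).trans (le_max_right _ _)
  · rw [Set.uIcc_of_le hac.le]
    exact ⟨le_max_left _ _, max_le hac.le (by linarith)⟩

theorem exists_mem_Ioc_add_inter_uIcc {a d ε : ℝ} (hε : 0 < ε) (hda : d < a) :
    ∃ x ∈ Set.Ioc d (d + ε), x ∈ Set.uIcc a d := by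
  refine ⟨min a (d + ε / 2), ⟨lt_min hda (by linarith), ?_⟩, ?_⟩
  · exact (min_le_right _ _).trans (by linarith)
  · rw [Set.uIcc_of_ge hda.le]
    exact ⟨le_min hda.le (by linarith), min_le_left _ _⟩

theorem exists_mem_Ico_of_spanRect_subset {P : Set (ℝ × ℝ)} {g : ℝ × ℝ} {c h ε : ℝ}
    (hε : 0 < ε) (hgc : g.1 < c) (hsee : spanRect g (c, h) ⊆ P) :
    ∃ x ∈ Set.Ico (c - ε) c, (x, h) ∈ P := by
  obtain ⟨x, hx, hxg⟩ := exists_mem_Ico_sub_inter_uIcc hε hgc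
  exact ⟨x, hx, hsee (mk_mem_spanRect_of_mem_uIcc hxg)⟩

theorem exists_mem_Ioc_of_spanRect_subset {P : Set (ℝ × ℝ)} {g : ℝ × ℝ} {d h ε : ℝ}
    (hε : 0 < ε) (hdg : d < g.1) (hsee : spanRect g (d, h) ⊆ P) :
    ∃ x ∈ Set.Ioc d (d + ε), (x, h) ∈ P := by
  obtain ⟨x, hx, hxg⟩ := exists_mem_Ioc_add_inter_uIcc hε hdg
  exact ⟨x, hx, hsee (mk_mem_spanRect_of_mem_uIcc hxg)⟩

theorem no_point_outside_strip_sees_whole_tooth_general (P : Set (ℝ × ℝ))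
    (c d h : ℝ) (hcd : c ≤ d)
    (ε : ℝ) (hε : 0 < ε)
    (hside : ∀ x ∈ Set.Ico (c - ε) c ∪ Set.Ioc d (d + ε), (x, h) ∉ P)
    (g : ℝ × ℝ) (hgx : g.1 ∉ Set.Icc c d) :
    ¬ ∀ q ∈ Set.Icc c d ×ˢ ({h} : Set ℝ), spanRect g q ⊆ P := by
  intro hsee
  rcases not_and_or.mp hgx with hgc | hdg
  · obtain ⟨x, hx, hxP⟩ := exists_mem_Ico_of_spanRect_subset hε (not_le.mp hgc)
      (hsee (c, h) ⟨⟨le_rfl, hcd⟩, rfl⟩)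
    exact hside x (Or.inl hx) hxP
  · obtain ⟨x, hx, hxP⟩ := exists_mem_Ioc_of_spanRect_subset hε (not_le.mp hdg)
      (hsee (d, h) ⟨⟨hcd, le_rfl⟩, rfl⟩)
    exact hside x (Or.inr hx) hxP

/-- If `t = [c,d] × {h}` is a maximal horizontal (tooth) edge of a compact
region `P`, then no point `g ∈ P` with `g₁ ∉ [c,d]` can r-see all of `t`. -/
theorem no_point_outside_strip_sees_whole_tooth (P : Set (ℝ × ℝ)) (hP : IsCompact P)
    (c d h : ℝ) (hcd : c ≤ d)
    (ht : Set.Icc c d ×ˢ ({h} : Set ℝ) ⊆ P)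
    (ε : ℝ) (hε : 0 < ε)
    (hside : ∀ x ∈ Set.Ico (c - ε) c ∪ Set.Ioc d (d + ε), (x, h) ∉ P)
    (g : ℝ × ℝ) (hg : g ∈ P) (hgx : g.1 ∉ Set.Icc c d) :
    ¬ ∀ q ∈ Set.Icc c d ×ˢ ({h} : Set ℝ), spanRect g q ⊆ P :=
  no_point_outside_strip_sees_whole_tooth_general P c d h hcd ε hε hside g hgx
end

section
/- A fan polygon has a nonempty kernel containing one of its vertices: if P is an orthoconvex compact region whose bounding box B satisfies that two adjacent edges of B (say the bottom edge and the left edge) are contained in P, then the corner point v of B common to those two edges belongs to P and every point of P is r-visible from v. -/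
open Set

lemma spanRect_of_le {p q : ℝ × ℝ} (h₁ : p.1 ≤ q.1) (h₂ : p.2 ≤ q.2) :
    spanRect p q = Icc p.1 q.1 ×ˢ Icc p.2 q.2 := by
  simp only [spanRect, min_eq_left h₁, max_eq_right h₁, min_eq_left h₂, max_eq_right h₂]

section Orthoconvex

variable {P : Set (ℝ × ℝ)}

lemma mk_mem_of_isPreconnected_vertical {c u w t : ℝ}
    (hconv : IsPreconnected {p : ℝ × ℝ | p ∈ P ∧ p.1 = c})
    (hu : (c, u) ∈ P) (hw : (c, w) ∈ P) (ht : t ∈ Icc u w) : (c, t) ∈ P := by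
  have hord := (hconv.image Prod.snd continuous_snd.continuousOn).ordConnected
  obtain ⟨⟨_, _⟩, ⟨hz, rfl⟩, rfl⟩ := hord.out ⟨_, ⟨hu, rfl⟩, rfl⟩ ⟨_, ⟨hw, rfl⟩, rfl⟩ ht
  exact hz

lemma mk_mem_of_isPreconnected_horizontal {c u w t : ℝ}
    (hconv : IsPreconnected {p : ℝ × ℝ | p ∈ P ∧ p.2 = c})
    (hu : (u, c) ∈ P) (hw : (w, c) ∈ P) (ht : t ∈ Icc u w) : (t, c) ∈ P := by
  have hord := (hconv.image Prod.fst continuous_fst.continuousOn).ordConnected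
  obtain ⟨⟨_, _⟩, ⟨hz, rfl⟩, rfl⟩ := hord.out ⟨_, ⟨hu, rfl⟩, rfl⟩ ⟨_, ⟨hw, rfl⟩, rfl⟩ ht
  exact hz

lemma prod_Icc_subset_of_corners_mem
    (hxconv : ∀ y : ℝ, IsPreconnected {p : ℝ × ℝ | p ∈ P ∧ p.2 = y})
    (hyconv : ∀ x : ℝ, IsPreconnected {p : ℝ × ℝ | p ∈ P ∧ p.1 = x})
    {a b c d : ℝ} (hac : (a, c) ∈ P) (had : (a, d) ∈ P) (hbc : (b, c) ∈ P) (hbd : (b, d) ∈ P) :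
    Icc a b ×ˢ Icc c d ⊆ P := by
  rintro ⟨s, t⟩ ⟨hs, ht⟩
  have hleft : (a, t) ∈ P := mk_mem_of_isPreconnected_vertical (hyconv a) hac had ht
  have hright : (b, t) ∈ P := mk_mem_of_isPreconnected_vertical (hyconv b) hbc hbd ht
  exact mk_mem_of_isPreconnected_horizontal (hxconv t) hleft hright hs

end Orthoconvex

theorem fan_polygon_corner_in_kernel_general (P : Set (ℝ × ℝ))
    (hne : P.Nonempty)
    (hxconv : ∀ y : ℝ, IsPreconnected {p : ℝ × ℝ | p ∈ P ∧ p.2 = y})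
    (hyconv : ∀ x : ℝ, IsPreconnected {p : ℝ × ℝ | p ∈ P ∧ p.1 = x})
    (x₁ x₂ y₁ y₂ : ℝ)
    (hbox : P ⊆ Set.Icc x₁ x₂ ×ˢ Set.Icc y₁ y₂)
    (hbot : Set.Icc x₁ x₂ ×ˢ ({y₁} : Set ℝ) ⊆ P)
    (hleft : ({x₁} : Set ℝ) ×ˢ Set.Icc y₁ y₂ ⊆ P) :
    (x₁, y₁) ∈ P ∧ ∀ p ∈ P, spanRect (x₁, y₁) p ⊆ P := by
  have hkernel : ∀ p ∈ P, spanRect (x₁, y₁) p ⊆ P := by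
    rintro ⟨s, t⟩ hp
    obtain ⟨⟨hxs, hsx⟩, ⟨hyt, hty⟩⟩ := hbox hp
    rw [spanRect_of_le hxs hyt]
    have hx₁₂ : x₁ ≤ x₂ := hxs.trans hsx
    exact prod_Icc_subset_of_corners_mem hxconv hyconv (hbot ⟨⟨le_rfl, hx₁₂⟩, rfl⟩)
      (hleft ⟨rfl, hyt, hty⟩) (hbot ⟨⟨hxs, hsx⟩, rfl⟩) hp
  obtain ⟨p, hp⟩ := hne
  have hcorner : (x₁, y₁) ∈ spanRect (x₁, y₁) p :=
    ⟨⟨min_le_left _ _, le_max_left _ _⟩, min_le_left _ _, le_max_left _ _⟩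
  exact ⟨hkernel p hp hcorner, hkernel⟩

/-- A fan polygon has a nonempty kernel containing a vertex: if an
orthoconvex compact region `P` contains the bottom and left edges of its bounding box
`[x₁,x₂] × [y₁,y₂]`, then the corner `(x₁,y₁)` belongs to `P` and r-sees all of `P`. -/
theorem fan_polygon_corner_in_kernel (P : Set (ℝ × ℝ)) (hP : IsCompact P)
    (hne : P.Nonempty)
    (hxconv : ∀ y : ℝ, IsPreconnected {p : ℝ × ℝ | p ∈ P ∧ p.2 = y})
    (hyconv : ∀ x : ℝ, IsPreconnected {p : ℝ × ℝ | p ∈ P ∧ p.1 = x})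
    (x₁ x₂ y₁ y₂ : ℝ)
    (hbox : P ⊆ Set.Icc x₁ x₂ ×ˢ Set.Icc y₁ y₂)
    (hx₁ : IsLeast (Prod.fst '' P) x₁) (hx₂ : IsGreatest (Prod.fst '' P) x₂)
    (hy₁ : IsLeast (Prod.snd '' P) y₁) (hy₂ : IsGreatest (Prod.snd '' P) y₂)
    (hbot : Set.Icc x₁ x₂ ×ˢ ({y₁} : Set ℝ) ⊆ P)
    (hleft : ({x₁} : Set ℝ) ×ˢ Set.Icc y₁ y₂ ⊆ P) :
    (x₁, y₁) ∈ P ∧ ∀ p ∈ P, spanRect (x₁, y₁) p ⊆ P :=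
  fan_polygon_corner_in_kernel_general P hne hxconv hyconv x₁ x₂ y₁ y₂ hbox hbot hleft
end
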